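/- arXiv:2012.12020 — 3 statements merged into one kernel-verified Lean document; each statement's English description precedes it below -/
import Mathlib

section
/- (Proposition 1, upper bound) Suppose σ ∈ [σ̲, σ̄], π ∈ [π̲, π̄] with σ̄ + π̲ - 1 > 0, σ̲ + π̄ - 1 > 0, γ + π̲ - 1 ≥ 0, γ ≤ σ̲, and γ = σ·q + (1-π)(1-q) where q ∈ [0,1]. Then the overall prevalence ρ = τ·q + (1-τ)·r with r ∈ [0,1] satisfies ρ ≤ τ·(γ + π̄ - 1)/(σ̲ + π̄ - 1) + (1-τ). -/
theorem stmt_5 (γ τ σ π q r σl σu πl πu : ℝ)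
    (hσ : σ ∈ Set.Icc σl σu) (hπ : π ∈ Set.Icc πl πu)
    (h1 : σu + πl - 1 > 0) (h2 : σl + πu - 1 > 0)
    (h3 : γ + πl - 1 ≥ 0) (h4 : γ ≤ σl)
    (hτ : τ ∈ Set.Icc (0:ℝ) 1) (hq : q ∈ Set.Icc (0:ℝ) 1) (hr : r ∈ Set.Icc (0:ℝ) 1)
    (hyield : γ = σ * q + (1 - π) * (1 - q)) :
    τ * q + (1 - τ) * r ≤ τ * ((γ + πu - 1) / (σl + πu - 1)) + (1 - τ) := by
  obtain ⟨hσ1, hσ2⟩ := hσ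
  obtain ⟨hπ1, hπ2⟩ := hπ
  obtain ⟨hτ1, hτ2⟩ := hτ
  obtain ⟨hq1, hq2⟩ := hq
  obtain ⟨hr1, hr2⟩ := hr
  have hqle : q ≤ (γ + πu - 1) / (σl + πu - 1) := by
    rw [le_div_iff₀ h2]
    nlinarith [mul_nonneg (sub_nonneg.2 hσ1) hq1,
      mul_nonneg (sub_nonneg.2 hπ2) (sub_nonneg.2 hq2)]
  have h5 : (1 - τ) * r ≤ (1 - τ) * 1 :=
    mul_le_mul_of_nonneg_left hr2 (by linarith)
  have h6 : τ * q ≤ τ * ((γ + πu - 1) / (σl + πu - 1)) :=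
    mul_le_mul_of_nonneg_left hqle hτ1
  linarith
end

section
/- (Sharpness of Proposition 1) Under the assumptions that σ can take any value in [σ̲, σ̄], π any value in [π̲, π̄] (with σ̄ + π̲ - 1 > 0, σ̲ + π̄ - 1 > 0, γ + π̲ - 1 ≥ 0, γ ≤ σ̲, and (γ+π̄-1)/(σ̲+π̄-1) ≤ 1), and r any value in [0,1], every ρ in the interval [τ·(γ+π̲-1)/(σ̄+π̲-1), τ·(γ+π̄-1)/(σ̲+π̄-1) + (1-τ)] is attained by some feasible choice of (σ, π, r) with ρ = τ·(γ+π-1)/(σ+π-1) + (1-τ)·r. -/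
/-!
The feasible `(σ, π)` together with `σ + π > 1` form a convex set, on which
`(σ, π, r) ↦ τ (γ + π - 1)/(σ + π - 1) + (1 - τ) r` is continuous for `r ∈ [0, 1]`. The two
endpoints of the interval are its values at `(σ̄, π̲, 0)` and `(σ̲, π̄, 1)`, so the intermediate
value theorem attains every `ρ` in between. Then `q ∈ [0, 1]` holds pointwise, since
`0 ≤ γ + π̲ - 1 ≤ γ + π - 1 ≤ σ + π - 1` by `γ ≤ σ̲ ≤ σ`.
-/

open Set

def feasibleParams (σl σu πl πu : ℝ) : Set (ℝ × ℝ) :=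
  (Icc σl σu ×ˢ Icc πl πu) ∩ {p | 1 < p.1 + p.2}

lemma convex_feasibleParams (σl σu πl πu : ℝ) : Convex ℝ (feasibleParams σl σu πl πu) :=
  ((convex_Icc σl σu).prod (convex_Icc πl πu)).inter
    (convex_halfSpace_gt (LinearMap.fst ℝ ℝ ℝ + LinearMap.snd ℝ ℝ ℝ).isLinear 1)

lemma continuousOn_ratio_feasibleParams (γ σl σu πl πu : ℝ) :
    ContinuousOn (fun p : ℝ × ℝ => (γ + p.2 - 1) / (p.1 + p.2 - 1))
      (feasibleParams σl σu πl πu) :=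
  ContinuousOn.div (by fun_prop) (by fun_prop) fun _ hp => by linarith [hp.2.out]

lemma ratio_mem_Icc_of_mem_feasibleParams {γ σl σu πl πu : ℝ}
    (hγπ : 0 ≤ γ + πl - 1) (hγσ : γ ≤ σl) {p : ℝ × ℝ} (hp : p ∈ feasibleParams σl σu πl πu) :
    (γ + p.2 - 1) / (p.1 + p.2 - 1) ∈ Icc (0 : ℝ) 1 := by
  obtain ⟨⟨hσ, hπ⟩, hpos⟩ := hp
  exact ⟨div_nonneg (by linarith [hπ.1]) (by linarith [hpos.out]),
    div_le_one_of_le₀ (by linarith [hσ.1]) (by linarith [hpos.out])⟩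

theorem stmt_6_general (γ τ σl σu πl πu : ℝ)
    (hσi : σl ≤ σu) (hπi : πl ≤ πu)
    (h1 : σu + πl - 1 > 0) (h2 : σl + πu - 1 > 0)
    (h3 : γ + πl - 1 ≥ 0) (h4 : γ ≤ σl) :
    ∀ ρ ∈ Set.Icc (τ * ((γ + πl - 1) / (σu + πl - 1)))
        (τ * ((γ + πu - 1) / (σl + πu - 1)) + (1 - τ)),
      ∃ σ π r : ℝ, σ ∈ Set.Icc σl σu ∧ π ∈ Set.Icc πl πu ∧ r ∈ Set.Icc (0:ℝ) 1 ∧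
        (γ + π - 1) / (σ + π - 1) ∈ Set.Icc (0:ℝ) 1 ∧
        ρ = τ * ((γ + π - 1) / (σ + π - 1)) + (1 - τ) * r := by
  intro ρ hρ
  set D := feasibleParams σl σu πl πu ×ˢ Icc (0 : ℝ) 1
  set Φ : (ℝ × ℝ) × ℝ → ℝ := fun x =>
    τ * ((γ + x.1.2 - 1) / (x.1.1 + x.1.2 - 1)) + (1 - τ) * x.2
  have hD : IsPreconnected D :=
    ((convex_feasibleParams σl σu πl πu).prod (convex_Icc 0 1)).isPreconnected
  have hΦ : ContinuousOn Φ D :=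
    (continuousOn_const.mul ((continuousOn_ratio_feasibleParams γ σl σu πl πu).comp
      continuousOn_fst (mapsTo_fst_prod))).add (continuousOn_const.mul continuousOn_snd)
  have hlo : ((σu, πl), 0) ∈ D :=
    ⟨⟨⟨right_mem_Icc.2 hσi, left_mem_Icc.2 hπi⟩, (by linarith : 1 < σu + πl)⟩,
      left_mem_Icc.2 zero_le_one⟩
  have hhi : ((σl, πu), 1) ∈ D :=
    ⟨⟨⟨left_mem_Icc.2 hσi, right_mem_Icc.2 hπi⟩, (by linarith : 1 < σl + πu)⟩,
      right_mem_Icc.2 zero_le_one⟩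
  have hρ' : ρ ∈ Icc (Φ ((σu, πl), 0)) (Φ ((σl, πu), 1)) := by simpa [Φ] using hρ
  obtain ⟨⟨⟨σ, π⟩, r⟩, ⟨hp, hr⟩, rfl⟩ := hD.intermediate_value hlo hhi hΦ hρ'
  exact ⟨σ, π, r, hp.1.1, hp.1.2, hr, ratio_mem_Icc_of_mem_feasibleParams h3 h4 hp, rfl⟩

theorem stmt_6 (γ τ σl σu πl πu : ℝ)
    (hσi : σl ≤ σu) (hπi : πl ≤ πu)
    (h1 : σu + πl - 1 > 0) (h2 : σl + πu - 1 > 0)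
    (h3 : γ + πl - 1 ≥ 0) (h4 : γ ≤ σl)
    (h5 : (γ + πu - 1) / (σl + πu - 1) ≤ 1)
    (hτ : τ ∈ Set.Icc (0:ℝ) 1) :
    ∀ ρ ∈ Set.Icc (τ * ((γ + πl - 1) / (σu + πl - 1)))
        (τ * ((γ + πu - 1) / (σl + πu - 1)) + (1 - τ)),
      ∃ σ π r : ℝ, σ ∈ Set.Icc σl σu ∧ π ∈ Set.Icc πl πu ∧ r ∈ Set.Icc (0:ℝ) 1 ∧
        (γ + π - 1) / (σ + π - 1) ∈ Set.Icc (0:ℝ) 1 ∧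
        ρ = τ * ((γ + π - 1) / (σ + π - 1)) + (1 - τ) * r :=
  stmt_6_general γ τ σl σu πl πu hσi hπi h1 h2 h3 h4
end

section
/- (Proposition 2) Suppose Assumption 1 (σ ∈ [σ̲,σ̄], π ∈ [π̲,π̄]) and Assumption 2 (r/q ∈ [κ̲, κ̄] with κ̲ ≥ 0) hold, where q = (γ+π-1)/(σ+π-1) > 0 is the prevalence among tested and r the prevalence among untested. Assume σ̄ + π̲ - 1 > 0, σ̲ + π̄ - 1 > 0, γ + π̲ - 1 > 0, γ ≤ σ̲, and κ̄ ≤ (σ+π-1)/(γ+π-1) for all feasible (σ,π). Then the overall prevalence ρ = τ·q + (1-τ)·r satisfies (τ + (1-τ)·κ̲)·(γ+π̲-1)/(σ̄+π̲-1) ≤ ρ ≤ (τ + (1-τ)·κ̄)·(γ+π̄-1)/(σ̲+π̄-1). -/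
theorem stmt_7 (γ τ σ π q r κl κu σl σu πl πu : ℝ)
    (hσ : σ ∈ Set.Icc σl σu) (hπ : π ∈ Set.Icc πl πu)
    (h1 : σu + πl - 1 > 0) (h2 : σl + πu - 1 > 0)
    (h3 : γ + πl - 1 > 0) (h4 : γ ≤ σl)
    (hτ : τ ∈ Set.Icc (0:ℝ) 1)
    (hq : q = (γ + π - 1) / (σ + π - 1)) (hqpos : q > 0)
    (hκl : κl ≥ 0)
    (hsel : r / q ∈ Set.Icc κl κu)
    (hκu : ∀ σ' π' : ℝ, σ' ∈ Set.Icc σl σu → π' ∈ Set.Icc πl πu →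
      κu ≤ (σ' + π' - 1) / (γ + π' - 1)) :
    (τ + (1 - τ) * κl) * ((γ + πl - 1) / (σu + πl - 1)) ≤ τ * q + (1 - τ) * r ∧
    τ * q + (1 - τ) * r ≤ (τ + (1 - τ) * κu) * ((γ + πu - 1) / (σl + πu - 1)) := by
  obtain ⟨hσ1, hσ2⟩ := hσ
  obtain ⟨hπ1, hπ2⟩ := hπ
  obtain ⟨hτ1, hτ2⟩ := hτ
  obtain ⟨hs1, hs2⟩ := hsel
  -- numerator positive
  have hnum : γ + π - 1 > 0 := by linarith
  -- denominator positive
  have hden : σ + π - 1 > 0 := by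
    rcases lt_or_ge 0 (σ + π - 1) with h | h
    · exact h
    · exfalso
      have : (γ + π - 1) / (σ + π - 1) ≤ 0 := div_nonpos_of_nonneg_of_nonpos hnum.le (by linarith)
      rw [← hq] at this; linarith
  have hql : (γ + πl - 1) / (σu + πl - 1) ≤ q := by
    rw [hq, div_le_div_iff₀ h1 hden]
    nlinarith [mul_nonneg (by linarith : (0:ℝ) ≤ γ + π - 1) (by linarith : (0:ℝ) ≤ σu - σ),
      mul_nonneg (by linarith : (0:ℝ) ≤ π - πl) (by linarith : (0:ℝ) ≤ σ - γ)]
  have hqu : q ≤ (γ + πu - 1) / (σl + πu - 1) := by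
    rw [hq, div_le_div_iff₀ hden h2]
    nlinarith [mul_nonneg (by linarith : (0:ℝ) ≤ γ + π - 1) (by linarith : (0:ℝ) ≤ σ - σl),
      mul_nonneg (by linarith : (0:ℝ) ≤ πu - π) (by linarith : (0:ℝ) ≤ σ - γ)]
  have hr1 : κl * q ≤ r := by
    have := (le_div_iff₀ hqpos).mp hs1; linarith
  have hr2 : r ≤ κu * q := by
    have := (div_le_iff₀ hqpos).mp hs2; linarith
  have hκu0 : 0 ≤ κu := le_trans hκl (le_trans hs1 hs2)
  constructor
  · have hc : 0 ≤ τ + (1 - τ) * κl := by nlinarith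
    have := mul_le_mul_of_nonneg_left hql hc
    nlinarith [mul_le_mul_of_nonneg_left hr1 (by linarith : (0:ℝ) ≤ 1 - τ)]
  · have hc : 0 ≤ τ + (1 - τ) * κu := by nlinarith
    have := mul_le_mul_of_nonneg_left hqu hc
    nlinarith [mul_le_mul_of_nonneg_left hr2 (by linarith : (0:ℝ) ≤ 1 - τ)]
end
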